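/- arXiv:math/0611932 — 6 statements merged into one kernel-verified Lean document; each statement's English description precedes it below -/
import Mathlib

section
/- In the asynchronous delayed consensus setup, let (t_k)_{k∈ℕ} be the strictly increasing enumeration of the set {t^i_k : i, k} ∪ {t^i_k − τ^k_{ij} : i, k, j ∈ N(i,k)} (so t_0 = 0 and t_{k+1} > t_k for all k). Then the following are equivalent: (i) there exists T ≥ 0 such that for every t0 ≥ 0 the union of the communication topology G^0 over the interval [t0, t0+T] contains a spanning tree; (ii) there exist an integer ℓ ≥ 1 and a real τ̂_v > 0 with the property that for every k ∈ ℕ there is a subset V_k of U_k = {t_{kℓ+1}, t_{kℓ+2}, …, t_{(k+1)ℓ}} such that the union of G^0 over the finite time set V_k contains a spanning tree and t_{s+1} − t_s ≥ τ̂_v for every t_s ∈ V_k. -/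
lemma tele_sum (f : ℕ → ℝ) (a c : ℕ) (h : a ≤ c) :
    ∑ s ∈ Finset.Ico a c, (f (s+1) - f s) = f c - f a := by
  induction c, h using Nat.le_induction with
  | base => simp
  | succ c hc ih => rw [Finset.sum_Ico_succ_top hc, ih]; ring


lemma aux_count {n K : ℕ} {τlo : ℝ} (hτlo : 0 < τlo)
    {t : Fin n → ℕ → ℝ} {N : Fin n → ℕ → Finset (Fin n)}
    {τd : Fin n → ℕ → Fin n → ℝ}
    (hlow : ∀ (i : Fin n) (k m : ℕ), t i k + m * τlo ≤ t i (k + m))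
    (hdelay : ∀ i k, ∀ j ∈ N i k, τd i k j ∈ Set.Icc (0:ℝ) ((K:ℝ)*τlo))
    {ts : ℕ → ℝ} (hmono : StrictMono ts)
    (hrange : Set.range ts =
      {s : ℝ | (∃ i k, t i k = s) ∨ ∃ i k, ∃ j ∈ N i k, t i k - τd i k j = s})
    {L : ℝ} (hL : 0 ≤ L) {a b : ℕ} (hab : a ≤ b) (hts : ts b - ts a ≤ L) :
    b + 1 ≤ a + n * ((n + 1) * (Nat.floor ((L + K * τlo) / τlo) + 1)) := by
  classical
  set M : ℕ := Nat.floor ((L + K * τlo) / τlo) + 1 with hM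
  have hW : ∀ s : ℕ, ∃ w : Fin n × ℕ × Option (Fin n),
      (w.2.2 = none ∧ t w.1 w.2.1 = ts s) ∨
      (∃ j, w.2.2 = some j ∧ j ∈ N w.1 w.2.1 ∧ t w.1 w.2.1 - τd w.1 w.2.1 j = ts s) := by
    intro s
    have hmem : ts s ∈ {s : ℝ | (∃ i k, t i k = s) ∨ ∃ i k, ∃ j ∈ N i k, t i k - τd i k j = s} := by
      rw [← hrange]; exact ⟨s, rfl⟩
    rcases hmem with ⟨i, k, hik⟩ | ⟨i, k, j, hj, hik⟩
    · exact ⟨(i, k, none), Or.inl ⟨rfl, hik⟩⟩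
    · exact ⟨(i, k, some j), Or.inr ⟨j, rfl, hj, hik⟩⟩
  choose W hWval using hW
  have hKτ : (0:ℝ) ≤ (K:ℝ) * τlo := by positivity
  have hval : ∀ s, a ≤ s → s ≤ b →
      ts a ≤ t (W s).1 (W s).2.1 ∧ t (W s).1 (W s).2.1 ≤ ts a + (L + K * τlo) := by
    intro s h1 h2
    have hs1 : ts a ≤ ts s := hmono.monotone h1
    have hs2 : ts s ≤ ts b := hmono.monotone h2
    rcases hWval s with ⟨_, heq⟩ | ⟨j, _, hj, heq⟩
    · constructor <;> linarith
    · obtain ⟨hd1, hd2⟩ := hdelay _ _ j hj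
      constructor <;> linarith
  have hdk : ∀ s s', a ≤ s → s ≤ b → a ≤ s' → s' ≤ b → (W s).1 = (W s').1 →
      (W s).2.1 ≤ (W s').2.1 + (M - 1) := by
    intro s s' h1 h2 h3 h4 hi
    rcases le_or_gt (W s).2.1 (W s').2.1 with h | h
    · omega
    · set m : ℕ := (W s).2.1 - (W s').2.1 with hm
      have hidx : (W s').2.1 + m = (W s).2.1 := by omega
      have hlo := hlow (W s').1 (W s').2.1 m
      rw [hidx] at hlo
      obtain ⟨hv1, hv2⟩ := hval s h1 h2
      obtain ⟨hv1', hv2'⟩ := hval s' h3 h4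
      rw [hi] at hv1 hv2
      have hmle : (m : ℝ) * τlo ≤ L + K * τlo := by linarith
      have : (m : ℝ) ≤ (L + K * τlo) / τlo := by
        rw [le_div_iff₀ hτlo]; linarith
      have hmfl : m ≤ Nat.floor ((L + K * τlo) / τlo) := Nat.le_floor this
      omega
  set key : ℕ → Fin n × Option (Fin n) := fun s => ((W s).1, (W s).2.2) with hkey
  set kmin : Fin n × Option (Fin n) → ℕ :=
    fun p => sInf {m | ∃ s, a ≤ s ∧ s ≤ b ∧ key s = p ∧ (W s).2.1 = m} with hkmin
  have hkmin_le : ∀ s, a ≤ s → s ≤ b → kmin (key s) ≤ (W s).2.1 :=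
    fun s h1 h2 => Nat.sInf_le ⟨s, h1, h2, rfl, rfl⟩
  have hkmin_mem : ∀ s, a ≤ s → s ≤ b →
      ∃ s0, a ≤ s0 ∧ s0 ≤ b ∧ key s0 = key s ∧ (W s0).2.1 = kmin (key s) := by
    intro s h1 h2
    have hne : {m | ∃ s', a ≤ s' ∧ s' ≤ b ∧ key s' = key s ∧ (W s').2.1 = m}.Nonempty :=
      ⟨_, s, h1, h2, rfl, rfl⟩
    exact Nat.sInf_mem hne
  have hWts : ∀ u u' : ℕ, W u = W u' → ts u = ts u' := by
    intro u u' h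
    rcases hWval u with ⟨h1, h2⟩ | ⟨j, h1, hj, h2⟩ <;>
      rcases hWval u' with ⟨h1', h2'⟩ | ⟨j', h1', hj', h2'⟩
    · rw [← h2, ← h2', h]
    · rw [h] at h1; rw [h1] at h1'; exact absurd h1' (by simp)
    · rw [h] at h1; rw [h1] at h1'; exact absurd h1' (by simp)
    · rw [h] at h1
      rw [h1] at h1'
      have : j = j' := by injection h1'
      subst this
      rw [← h2, ← h2', h]
  have hcard := Finset.card_le_card_of_injOn
      (fun s => ((W s).1, (W s).2.2, (W s).2.1 - kmin (key s)))
      (s := Finset.Icc a b) (t := (Finset.univ : Finset (Fin n)) ×ˢ (Finset.univ : Finset (Option (Fin n))) ×ˢ Finset.range M)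
      (fun s hs => by
        rw [Finset.mem_coe, Finset.mem_Icc] at hs
        obtain ⟨s0, hs0a, hs0b, hs0key, hs0k⟩ := hkmin_mem s hs.1 hs.2
        have hik : (W s0).1 = (W s).1 := congrArg (fun p : Fin n × Option (Fin n) => p.1) hs0key
        have := hdk s s0 hs.1 hs.2 hs0a hs0b hik.symm
        simp only [Finset.mem_coe, Finset.mem_product, Finset.mem_univ, Finset.mem_range, true_and]
        omega)
      (by
        intro s hs s' hs' heq
        rw [Finset.mem_coe, Finset.mem_Icc] at hs hs'
        have e1 : (W s).1 = (W s').1 := congrArg (fun p => p.1) heq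
        have e2 : (W s).2.2 = (W s').2.2 := congrArg (fun p => p.2.1) heq
        have e3 : (W s).2.1 - kmin (key s) = (W s').2.1 - kmin (key s') :=
          congrArg (fun p => p.2.2) heq
        have ekey : key s = key s' := by rw [hkey]; simp only; rw [e1, e2]
        rw [ekey] at e3
        have l1 := hkmin_le s hs.1 hs.2
        have l2 := hkmin_le s' hs'.1 hs'.2
        rw [ekey] at l1
        have e4 : (W s).2.1 = (W s').2.1 := by omega
        have : W s = W s' := by
          ext
          · exact congrArg Fin.val e1
          · exact e4
          · rw [e2]
        exact hmono.injective (hWts s s' this))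
  have hcard2 : ((Finset.univ : Finset (Fin n)) ×ˢ (Finset.univ : Finset (Option (Fin n))) ×ˢ
      Finset.range M).card = n * ((n + 1) * M) := by
    simp [Finset.card_product]
  rw [Nat.card_Icc, hcard2] at hcard
  omega


/-- Equivalent formulations of the connectivity condition: the union of the communication
topology `G⁰` over every interval of a fixed length `T` contains a spanning tree iff
there are `ℓ ≥ 1` and `τ̂_v > 0` such that each block `U_k = {t_{kℓ+1}, …, t_{(k+1)ℓ}}`
of the ordered sequence of (delayed) update times contains a subset `V_k` whose union
graph contains a spanning tree and whose elements are followed by gaps of length at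
least `τ̂_v`. -/
theorem connectivity_condition_equivalence
    (n : ℕ) (hn : 1 ≤ n) (K : ℕ)
    (τlo τhi : ℝ) (hτlo : 0 < τlo) (hττ : τlo ≤ τhi)
    (t : Fin n → ℕ → ℝ)
    (ht0 : ∀ i, t i 0 = 0)
    (hstep : ∀ i k, τlo ≤ t i (k + 1) - t i k ∧ t i (k + 1) - t i k ≤ τhi)
    (N : Fin n → ℕ → Finset (Fin n))
    (hNself : ∀ i k, i ∉ N i k)
    (τd : Fin n → ℕ → Fin n → ℝ)
    (hdelay : ∀ i k, ∀ j ∈ N i k, τd i k j ∈ Set.Icc (0 : ℝ) ((K : ℝ) * τlo))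
    (ts : ℕ → ℝ)
    (hmono : StrictMono ts)
    (hts0 : ts 0 = 0)
    (hrange : Set.range ts =
      {s : ℝ | (∃ i k, t i k = s) ∨ ∃ i k, ∃ j ∈ N i k, t i k - τd i k j = s}) :
    (∃ T : ℝ, 0 ≤ T ∧ ∀ t0 : ℝ, 0 ≤ t0 → ∃ root : Fin n, ∀ v : Fin n,
        Relation.ReflTransGen
          (fun p q : Fin n => ∃ s ∈ Set.Icc t0 (t0 + T), ∃ k : ℕ,
            s ∈ Set.Ico (t q k) (t q (k + 1)) ∧ p ∈ N q k)
          root v)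
      ↔
      (∃ ℓ : ℕ, 1 ≤ ℓ ∧ ∃ τv : ℝ, 0 < τv ∧ ∀ k : ℕ,
        ∃ V : Finset ℕ, V ⊆ Finset.Icc (k * ℓ + 1) ((k + 1) * ℓ) ∧
          (∀ s ∈ V, τv ≤ ts (s + 1) - ts s) ∧
          ∃ root : Fin n, ∀ v : Fin n,
            Relation.ReflTransGen
              (fun p q : Fin n => ∃ s ∈ V, ∃ k' : ℕ,
                ts s ∈ Set.Ico (t q k') (t q (k' + 1)) ∧ p ∈ N q k')
              root v) := by
  classical
  have hτhi : 0 < τhi := lt_of_lt_of_le hτlo hττ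
  set i0 : Fin n := ⟨0, hn⟩ with hi0
  have hlow : ∀ (i : Fin n) (k m : ℕ), t i k + (m : ℝ) * τlo ≤ t i (k + m) := by
    intro i k m
    induction m with
    | zero => simp
    | succ m ih =>
      have h1 := (hstep i (k + m)).1
      have he : k + (m + 1) = (k + m) + 1 := rfl
      rw [he]
      push_cast
      push_cast at ih
      linarith
  have hub : ∀ (i : Fin n) (k : ℕ), t i (k + 1) ≤ t i k + τhi := fun i k => by
    have := (hstep i k).2; linarith
  have htlb : ∀ (i : Fin n) (k : ℕ), (k : ℝ) * τlo ≤ t i k := by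
    intro i k
    have := hlow i 0 k
    simpa [ht0 i] using this
  have hidx : ∀ x : ℝ, ((∃ i k, t i k = x) ∨ ∃ i k, ∃ j ∈ N i k, t i k - τd i k j = x) →
      ∃ s, ts s = x := by
    intro x hx
    have : x ∈ Set.range ts := by rw [hrange]; exact hx
    exact this
  have htsnn : ∀ s, 0 ≤ ts s := by
    intro s
    have := hmono.monotone (Nat.zero_le s)
    rwa [hts0] at this
  have hunb : ∀ x : ℝ, ∃ s : ℕ, x < ts s := by
    intro x
    obtain ⟨c, hc⟩ := exists_nat_gt (x / τlo)
    have hcx : x < (c : ℝ) * τlo := by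
      rw [div_lt_iff₀ hτlo] at hc; linarith
    obtain ⟨s, hs⟩ := hidx (t i0 c) (Or.inl ⟨i0, c, rfl⟩)
    exact ⟨s, by rw [hs]; exact lt_of_lt_of_le hcx (htlb i0 c)⟩
  have hgapub : ∀ s : ℕ, ts (s + 1) ≤ ts s + τhi := by
    intro s
    have hex : ∃ c : ℕ, ts s < t i0 c := by
      obtain ⟨c, hc⟩ := exists_nat_gt (ts s / τlo)
      have : ts s < (c : ℝ) * τlo := by rw [div_lt_iff₀ hτlo] at hc; linarith
      exact ⟨c, lt_of_lt_of_le this (htlb i0 c)⟩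
    have hcs : ts s < t i0 (Nat.find hex) := Nat.find_spec hex
    have hc0 : Nat.find hex ≠ 0 := by
      intro h
      rw [h, ht0] at hcs
      exact absurd hcs (not_lt.mpr (htsnn s))
    have hprev : ¬ ts s < t i0 (Nat.find hex - 1) := Nat.find_min hex (by omega)
    push_neg at hprev
    obtain ⟨m, hm⟩ := hidx (t i0 (Nat.find hex)) (Or.inl ⟨i0, Nat.find hex, rfl⟩)
    have hsm : s < m := by
      apply hmono.lt_iff_lt.mp
      rw [hm]; exact hcs
    have h1 : ts (s + 1) ≤ ts m := hmono.monotone hsm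
    have h2 : t i0 (Nat.find hex) ≤ t i0 (Nat.find hex - 1) + τhi := by
      have h3 := hub i0 (Nat.find hex - 1)
      have he : Nat.find hex - 1 + 1 = Nat.find hex := by omega
      rwa [he] at h3
    rw [hm] at h1
    linarith
  have hstepsum : ∀ (x m : ℕ), ts (x + m) ≤ ts x + (m : ℝ) * τhi := by
    intro x m
    induction m with
    | zero => simp
    | succ m ih =>
      have h1 := hgapub (x + m)
      have he : x + (m + 1) = (x + m) + 1 := rfl
      rw [he]
      push_cast
      push_cast at ih
      linarith
  constructor
  · -- forward direction
    rintro ⟨T, hT0, hT⟩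
    set D0 : ℕ := n * ((n + 1) * (K + 2)) with hD0
    have hD0pos : 0 < D0 := Nat.mul_pos hn (Nat.mul_pos (by omega) (by omega))
    have hfloor : Nat.floor ((τlo + (K : ℝ) * τlo) / τlo) = K + 1 := by
      have h1 : (τlo + (K : ℝ) * τlo) / τlo = ((K + 1 : ℕ) : ℝ) := by
        rw [div_eq_iff hτlo.ne']; push_cast; ring
      rw [h1, Nat.floor_natCast]
    have hgrow : ∀ x : ℕ, ts x + τlo < ts (x + D0) := by
      intro x
      by_contra hcon
      push_neg at hcon
      have h1 := aux_count hτlo hlow hdelay hmono hrange hτlo.le (Nat.le_add_right x D0)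
        (by linarith : ts (x + D0) - ts x ≤ τlo)
      rw [hfloor] at h1
      have h2 : n * ((n + 1) * (K + 1 + 1)) = D0 := rfl
      rw [h2] at h1
      omega
    have hgrows : ∀ (x m : ℕ), ts x + (m : ℝ) * τlo ≤ ts (x + m * D0) := by
      intro x m
      induction m with
      | zero => simp
      | succ m ih =>
        have h1 := hgrow (x + m * D0)
        have he : x + (m + 1) * D0 = (x + m * D0) + D0 := by ring
        rw [he]
        push_cast
        push_cast at ih
        linarith
    set E : ℕ := n * ((n + 1) * (Nat.floor ((τhi + (K : ℝ) * τlo) / τlo) + 1)) with hE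
    have hEpos : 0 < E := Nat.mul_pos hn (Nat.mul_pos (by omega) (by omega))
    set τv : ℝ := τlo / E with hτv
    have hτvpos : 0 < τv := div_pos hτlo (by exact_mod_cast hEpos)
    set m0 : ℕ := Nat.ceil ((T + 2 * τhi) / τlo) with hm0
    have hm0τ : T + 2 * τhi ≤ (m0 : ℝ) * τlo := by
      have h1 := Nat.le_ceil ((T + 2 * τhi) / τlo)
      rw [div_le_iff₀ hτlo] at h1
      linarith
    set ℓ : ℕ := m0 * D0 + 1 with hℓ
    refine ⟨ℓ, by omega, τv, hτvpos, ?_⟩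
    intro k
    set a0 : ℕ := k * ℓ + 1 with ha0
    set x0 : ℝ := ts a0 + τhi with hx0
    have hx0nn : 0 ≤ x0 := by
      have := htsnn a0; rw [hx0]; linarith
    obtain ⟨root, hroot⟩ := hT x0 hx0nn
    have hwin : ts a0 + (T + 2 * τhi) ≤ ts ((k + 1) * ℓ) := by
      have he : (k + 1) * ℓ = a0 + m0 * D0 := by rw [ha0, hℓ]; ring
      rw [he]
      have h1 := hgrows a0 m0
      linarith
    have key : ∀ p q : Fin n,
        (∃ s' ∈ Set.Icc x0 (x0 + T), ∃ k' : ℕ,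
            s' ∈ Set.Ico (t q k') (t q (k' + 1)) ∧ p ∈ N q k') →
        ∃ s : ℕ, (s ∈ Finset.Icc (k * ℓ + 1) ((k + 1) * ℓ)) ∧ τv ≤ ts (s + 1) - ts s ∧
          ∃ k' : ℕ, ts s ∈ Set.Ico (t q k') (t q (k' + 1)) ∧ p ∈ N q k' := by
      rintro p q ⟨s', ⟨hs'1, hs'2⟩, k', ⟨hk1, hk2⟩, hpN⟩
      obtain ⟨A, hA⟩ := hidx (t q k') (Or.inl ⟨q, k', rfl⟩)
      obtain ⟨C, hC⟩ := hidx (t q (k' + 1)) (Or.inl ⟨q, k' + 1, rfl⟩)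
      have hstep1 := (hstep q k').1
      have hstep2 := (hstep q k').2
      have hAC : A < C := by
        apply hmono.lt_iff_lt.mp
        rw [hA, hC]; linarith
      have hcnt := aux_count hτlo hlow hdelay hmono hrange (le_trans hτlo.le hττ) hAC.le
        (by rw [hA, hC]; linarith : ts C - ts A ≤ τhi)
      rw [← hE] at hcnt
      have hCA : (0 : ℝ) < (C : ℝ) - (A : ℝ) := by
        have : (A : ℝ) < C := by exact_mod_cast hAC
        linarith
      have hCAE : (C : ℝ) - (A : ℝ) ≤ (E : ℝ) := by
        have h1 : (C : ℝ) + 1 ≤ (A : ℝ) + E := by exact_mod_cast hcnt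
        linarith
      have hex : ∃ s ∈ Finset.Ico A C, τlo / ((C : ℝ) - A) ≤ ts (s + 1) - ts s := by
        by_contra hcon
        push_neg at hcon
        have hsum := tele_sum ts A C hAC.le
        have hlt : ∑ s ∈ Finset.Ico A C, (ts (s + 1) - ts s) <
            ∑ _s ∈ Finset.Ico A C, τlo / ((C : ℝ) - A) :=
          Finset.sum_lt_sum_of_nonempty (Finset.nonempty_Ico.mpr hAC) hcon
        rw [hsum, Finset.sum_const, Nat.card_Ico, nsmul_eq_mul] at hlt
        have hcast : ((C - A : ℕ) : ℝ) = (C : ℝ) - A := by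
          rw [Nat.cast_sub hAC.le]
        rw [hcast, mul_div_cancel₀ _ (ne_of_gt hCA)] at hlt
        rw [hA, hC] at hlt
        linarith
      obtain ⟨s, hsIco, hsgap⟩ := hex
      rw [Finset.mem_Ico] at hsIco
      have hgap2 : τv ≤ ts (s + 1) - ts s := by
        refine le_trans ?_ hsgap
        rw [hτv]
        gcongr
      have hA_lb : a0 < A := by
        apply hmono.lt_iff_lt.mp
        rw [hA]
        have h3 := hub q k'
        rw [hx0] at hs'1
        linarith
      have hsub : ts s < ts ((k + 1) * ℓ) := by
        calc ts s < ts C := hmono hsIco.2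
        _ = t q (k' + 1) := hC
        _ ≤ t q k' + τhi := hub q k'
        _ ≤ s' + τhi := by linarith
        _ ≤ x0 + T + τhi := by linarith
        _ = ts a0 + (T + 2 * τhi) := by rw [hx0]; ring
        _ ≤ ts ((k + 1) * ℓ) := hwin
      have hsupper : s < (k + 1) * ℓ := hmono.lt_iff_lt.mp hsub
      have hslow : A ≤ s := hsIco.1
      refine ⟨s, Finset.mem_Icc.mpr ⟨by omega, by omega⟩, hgap2, k', ⟨?_, ?_⟩, hpN⟩
      · rw [← hA]; exact hmono.monotone hsIco.1
      · rw [← hC]; exact hmono hsIco.2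
    set Edge : Fin n → Fin n → Prop := fun p q => ∃ s' ∈ Set.Icc x0 (x0 + T), ∃ k' : ℕ,
        s' ∈ Set.Ico (t q k') (t q (k' + 1)) ∧ p ∈ N q k' with hEdge
    set V : Finset ℕ := Finset.univ.biUnion (fun pq : Fin n × Fin n =>
      if h : Edge pq.1 pq.2 then {(key pq.1 pq.2 h).choose} else ∅) with hV
    have hVspec : ∀ s ∈ V, ∃ p q, ∃ h : Edge p q, s = (key p q h).choose := by
      intro s hs
      rw [hV, Finset.mem_biUnion] at hs
      obtain ⟨pq, _, hmem⟩ := hs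
      split at hmem
      · rw [Finset.mem_singleton] at hmem
        exact ⟨pq.1, pq.2, ‹_›, hmem⟩
      · simp at hmem
    refine ⟨V, ?_, ?_, ?_⟩
    · intro s hs
      obtain ⟨p, q, h, rfl⟩ := hVspec s hs
      exact ((key p q h).choose_spec).1
    · intro s hs
      obtain ⟨p, q, h, rfl⟩ := hVspec s hs
      exact ((key p q h).choose_spec).2.1
    · refine ⟨root, fun v => Relation.ReflTransGen.mono ?_ _ _ (hroot v)⟩
      intro p q hpq
      have hpq' : Edge p q := hpq
      obtain ⟨hicc, hgap, k', hico, hpN⟩ := (key p q hpq').choose_spec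
      refine ⟨(key p q hpq').choose, ?_, k', hico, hpN⟩
      rw [hV, Finset.mem_biUnion]
      exact ⟨(p, q), Finset.mem_univ _, by rw [dif_pos hpq']; exact Finset.mem_singleton_self _⟩
  · -- backward direction
    rintro ⟨ℓ, hℓ, τv, hτv, hblocks⟩
    have hℓR : (1 : ℝ) ≤ (ℓ : ℝ) := by exact_mod_cast hℓ
    refine ⟨2 * (ℓ : ℝ) * τhi, by positivity, ?_⟩
    intro t0 ht0'
    have hne : ∃ k : ℕ, t0 ≤ ts (k * ℓ + 1) := by
      obtain ⟨s, hs⟩ := hunb t0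
      refine ⟨s, le_trans hs.le (hmono.monotone ?_)⟩
      have h1 : s ≤ s * ℓ := Nat.le_mul_of_pos_right s (by omega)
      exact le_trans h1 (Nat.le_succ _)
    have hk1 : t0 ≤ ts (Nat.find hne * ℓ + 1) := Nat.find_spec hne
    set k := Nat.find hne with hkdef
    have hk2 : ts (k * ℓ + 1) ≤ t0 + (ℓ : ℝ) * τhi := by
      rcases Nat.eq_zero_or_pos k with h0 | hpos
      · rw [h0]
        have h1 := hstepsum 0 1
        rw [hts0] at h1
        simp only [Nat.zero_mul, Nat.zero_add, Nat.zero_add] at *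
        push_cast at h1
        nlinarith
      · have hprev : ¬ t0 ≤ ts ((k - 1) * ℓ + 1) := Nat.find_min hne (by omega)
        push_neg at hprev
        have he : (k - 1) * ℓ + 1 + ℓ = k * ℓ + 1 := by
          have h1 : k - 1 + 1 = k := by omega
          calc (k - 1) * ℓ + 1 + ℓ = ((k - 1) + 1) * ℓ + 1 := by ring
          _ = k * ℓ + 1 := by rw [h1]
        have h2 := hstepsum ((k - 1) * ℓ + 1) ℓ
        rw [he] at h2
        linarith
    obtain ⟨V, hVsub, hVgap, root, hroot⟩ := hblocks k
    have hblockup : ts ((k + 1) * ℓ) ≤ ts (k * ℓ + 1) + (ℓ : ℝ) * τhi := by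
      have he : k * ℓ + 1 + (ℓ - 1) = (k + 1) * ℓ := by
        have h1 : ℓ - 1 + 1 = ℓ := by omega
        calc k * ℓ + 1 + (ℓ - 1) = k * ℓ + ((ℓ - 1) + 1) := by
              rw [add_assoc, add_comm 1 (ℓ - 1)]
        _ = k * ℓ + ℓ := by rw [h1]
        _ = (k + 1) * ℓ := by ring
      have h2 := hstepsum (k * ℓ + 1) (ℓ - 1)
      rw [he] at h2
      have h3 : ((ℓ - 1 : ℕ) : ℝ) ≤ (ℓ : ℝ) := by exact_mod_cast Nat.sub_le ℓ 1
      nlinarith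
    refine ⟨root, fun v => Relation.ReflTransGen.mono ?_ _ _ (hroot v)⟩
    rintro p q ⟨s, hsV, k', hico, hpN⟩
    have hsIcc := Finset.mem_Icc.mp (hVsub hsV)
    refine ⟨ts s, ⟨?_, ?_⟩, k', hico, hpN⟩
    · exact le_trans hk1 (hmono.monotone hsIcc.1)
    · have h1 : ts s ≤ ts ((k + 1) * ℓ) := hmono.monotone hsIcc.2
      have h2 : 0 < τhi := hτhi
      nlinarith
end

section
/- For any stochastic r×r real matrices A_1, A_2, …, A_k (k ≥ 1), δ(A_k A_{k−1} ⋯ A_1) ≤ ∏_{i=1}^k λ(A_i). -/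
/-- `δ(A) = max_j max_{i₁,i₂} |A_{i₁ j} - A_{i₂ j}|`. -/
noncomputable def matDelta {r : ℕ} (A : Matrix (Fin r) (Fin r) ℝ) : ℝ :=
  ⨆ j, ⨆ i₁, ⨆ i₂, |A i₁ j - A i₂ j|

/-- `λ(A) = 1 - min_{i₁,i₂} Σ_j min (A_{i₁ j}) (A_{i₂ j})`. -/
noncomputable def matLambda {r : ℕ} (A : Matrix (Fin r) (Fin r) ℝ) : ℝ :=
  1 - ⨅ i₁, ⨅ i₂, ∑ j, min (A i₁ j) (A i₂ j)

/-!
For two rows `a₁, a₂` of a stochastic matrix `A` let `c = min a₁ a₂` entrywise. Then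
`a₁ - c` and `a₂ - c` are nonnegative with the same mass `1 - ∑ c ≤ λ(A)`, so the difference
of the two corresponding rows of `A * B`, in column `j`, is at most that mass times the spread
`max_s B s j - min_s B s j ≤ δ(B)` of that column. This gives `δ(A * B) ≤ λ(A) δ(B)`, and the
theorem follows by induction from `δ(1) ≤ 1`.
-/

open Finset

lemma sum_mul_sub_sum_mul_le {ι : Type*} [Fintype ι] {u v b : ι → ℝ} {m M : ℝ}
    (hu : ∀ i, 0 ≤ u i) (hv : ∀ i, 0 ≤ v i) (huv : ∑ i, u i = ∑ i, v i)
    (hb : ∀ i, b i ∈ Set.Icc m M) :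
    ∑ i, u i * b i - ∑ i, v i * b i ≤ (∑ i, u i) * (M - m) := by
  have hupper : ∑ i, u i * b i ≤ (∑ i, u i) * M := by
    rw [sum_mul]
    exact sum_le_sum fun i _ => mul_le_mul_of_nonneg_left (hb i).2 (hu i)
  have hlower : (∑ i, v i) * m ≤ ∑ i, v i * b i := by
    rw [sum_mul]
    exact sum_le_sum fun i _ => mul_le_mul_of_nonneg_left (hb i).1 (hv i)
  rw [huv] at hupper ⊢
  linarith

lemma sum_mul_sub_sum_mul_le_one_sub_sum_min {ι : Type*} [Fintype ι] {a₁ a₂ b : ι → ℝ}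
    {m M : ℝ} (h₁ : ∑ i, a₁ i = 1) (h₂ : ∑ i, a₂ i = 1) (hb : ∀ i, b i ∈ Set.Icc m M) :
    ∑ i, a₁ i * b i - ∑ i, a₂ i * b i ≤ (1 - ∑ i, min (a₁ i) (a₂ i)) * (M - m) := by
  set c := fun i => min (a₁ i) (a₂ i)
  have hmass : ∀ a : ι → ℝ, ∑ i, a i = 1 → ∑ i, (a i - c i) = 1 - ∑ i, c i := fun a ha => by
    rw [sum_sub_distrib, ha]
  have key := sum_mul_sub_sum_mul_le (u := fun i => a₁ i - c i) (v := fun i => a₂ i - c i)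
    (fun i => sub_nonneg.2 (min_le_left _ _)) (fun i => sub_nonneg.2 (min_le_right _ _))
    (by rw [hmass a₁ h₁, hmass a₂ h₂]) hb
  rw [hmass a₁ h₁] at key
  calc ∑ i, a₁ i * b i - ∑ i, a₂ i * b i
      = ∑ i, (a₁ i - c i) * b i - ∑ i, (a₂ i - c i) * b i := by
        simp only [sub_mul, sum_sub_distrib]; ring
    _ ≤ _ := key

section

variable {r : ℕ}

lemma matDelta_nonneg (B : Matrix (Fin r) (Fin r) ℝ) : 0 ≤ matDelta B :=
  Real.iSup_nonneg fun _ => Real.iSup_nonneg fun _ => Real.iSup_nonneg fun _ => abs_nonneg _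

lemma abs_sub_le_matDelta (B : Matrix (Fin r) (Fin r) ℝ) (i₁ i₂ j : Fin r) :
    |B i₁ j - B i₂ j| ≤ matDelta B :=
  calc |B i₁ j - B i₂ j| ≤ ⨆ i₂', |B i₁ j - B i₂' j| :=
        le_ciSup (f := fun i₂' => |B i₁ j - B i₂' j|) (Set.finite_range _).bddAbove i₂
    _ ≤ ⨆ i₁', ⨆ i₂', |B i₁' j - B i₂' j| :=
        le_ciSup (f := fun i₁' => ⨆ i₂', |B i₁' j - B i₂' j|) (Set.finite_range _).bddAbove i₁
    _ ≤ matDelta B :=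
        le_ciSup (f := fun j => ⨆ i₁', ⨆ i₂', |B i₁' j - B i₂' j|) (Set.finite_range _).bddAbove j

lemma matDelta_le {B : Matrix (Fin r) (Fin r) ℝ} {c : ℝ}
    (h : ∀ i₁ i₂ j, |B i₁ j - B i₂ j| ≤ c) (hc : 0 ≤ c) : matDelta B ≤ c :=
  Real.iSup_le (fun j => Real.iSup_le (fun i₁ => Real.iSup_le (fun i₂ => h i₁ i₂ j) hc) hc) hc

lemma matDelta_one_le : matDelta (1 : Matrix (Fin r) (Fin r) ℝ) ≤ 1 :=
  matDelta_le (fun i₁ i₂ j => by simp only [Matrix.one_apply]; split_ifs <;> norm_num) zero_le_one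

lemma one_sub_sum_min_le_matLambda (A : Matrix (Fin r) (Fin r) ℝ) (i₁ i₂ : Fin r) :
    1 - ∑ j, min (A i₁ j) (A i₂ j) ≤ matLambda A := by
  have hinf : ⨅ i₁', ⨅ i₂', ∑ j, min (A i₁' j) (A i₂' j) ≤ ∑ j, min (A i₁ j) (A i₂ j) :=
    (ciInf_le (f := fun i₁' => ⨅ i₂', ∑ j, min (A i₁' j) (A i₂' j))
      (Set.finite_range _).bddBelow i₁).trans (ciInf_le (Set.finite_range _).bddBelow i₂)
  rw [matLambda]
  linarith

lemma matLambda_nonneg {A : Matrix (Fin r) (Fin r) ℝ} (hA : ∀ i, ∑ j, A i j = 1) :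
    0 ≤ matLambda A := by
  cases isEmpty_or_nonempty (Fin r) with
  | inl _ => simp [matLambda, Real.iInf_of_isEmpty]
  | inr h =>
    obtain ⟨i⟩ := h
    simpa [hA i] using one_sub_sum_min_le_matLambda A i i

lemma mul_apply_sub_mul_apply_le {A : Matrix (Fin r) (Fin r) ℝ} (hA : ∀ i, ∑ j, A i j = 1)
    (B : Matrix (Fin r) (Fin r) ℝ) (i₁ i₂ j : Fin r) :
    (A * B) i₁ j - (A * B) i₂ j ≤ matLambda A * matDelta B := by
  have : Nonempty (Fin r) := ⟨i₁⟩
  obtain ⟨sMax, hsMax⟩ := Finite.exists_max fun s => B s j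
  obtain ⟨sMin, hsMin⟩ := Finite.exists_min fun s => B s j
  have hspread : B sMax j - B sMin j ≤ matDelta B :=
    (le_abs_self _).trans (abs_sub_le_matDelta B sMax sMin j)
  calc (A * B) i₁ j - (A * B) i₂ j
      ≤ (1 - ∑ s, min (A i₁ s) (A i₂ s)) * (B sMax j - B sMin j) := by
        simp only [Matrix.mul_apply]
        exact sum_mul_sub_sum_mul_le_one_sub_sum_min (hA i₁) (hA i₂) fun s => ⟨hsMin s, hsMax s⟩
    _ ≤ matLambda A * matDelta B :=
        mul_le_mul (one_sub_sum_min_le_matLambda A i₁ i₂) hspread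
          (sub_nonneg.2 (hsMin sMax)) (matLambda_nonneg hA)

lemma matDelta_mul_le {A : Matrix (Fin r) (Fin r) ℝ} (hA : ∀ i, ∑ j, A i j = 1)
    (B : Matrix (Fin r) (Fin r) ℝ) : matDelta (A * B) ≤ matLambda A * matDelta B :=
  matDelta_le (fun i₁ i₂ j => abs_sub_le_iff.2
      ⟨mul_apply_sub_mul_apply_le hA B i₁ i₂ j, mul_apply_sub_mul_apply_le hA B i₂ i₁ j⟩)
    (mul_nonneg (matLambda_nonneg hA) (matDelta_nonneg B))

lemma matDelta_le_prod_matLambda {k : ℕ} {A : Fin k → Matrix (Fin r) (Fin r) ℝ}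
    (hA : ∀ m i, ∑ j, A m i j = 1) {P : ℕ → Matrix (Fin r) (Fin r) ℝ} (hP0 : P 0 = 1)
    (hPrec : ∀ m (hm : m < k), P (m + 1) = A ⟨m, hm⟩ * P m) :
    ∀ n (hn : n ≤ k), matDelta (P n) ≤ ∏ i : Fin n, matLambda (A (Fin.castLE hn i))
  | 0, _ => by simpa [hP0] using matDelta_one_le
  | n + 1, hn => by
    rw [hPrec n hn, Fin.prod_univ_castSucc, mul_comm]
    simp only [Fin.castLE_castSucc]
    exact (matDelta_mul_le (hA _) _).trans <| mul_le_mul_of_nonneg_left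
      (matDelta_le_prod_matLambda hA hP0 hPrec n (Nat.le_of_succ_le hn)) (matLambda_nonneg (hA _))

end

theorem delta_prod_le_prod_lambda_general
    (r k : ℕ)
    (A : Fin k → Matrix (Fin r) (Fin r) ℝ)
    (hstoch : ∀ m, (∀ i j, 0 ≤ A m i j) ∧ ∀ i, ∑ j, A m i j = 1)
    (P : ℕ → Matrix (Fin r) (Fin r) ℝ)
    (hP0 : P 0 = 1)
    (hPrec : ∀ m (hm : m < k), P (m + 1) = A ⟨m, hm⟩ * P m) :
    matDelta (P k) ≤ ∏ m, matLambda (A m) := by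
  simpa using matDelta_le_prod_matLambda (fun m => (hstoch m).2) hP0 hPrec k le_rfl

/-- Wolfowitz's lemma: for stochastic matrices `A_1, …, A_k`,
`δ(A_k ⋯ A_1) ≤ ∏ᵢ λ(A_i)`. -/
theorem delta_prod_le_prod_lambda
    (r k : ℕ) (hk : 1 ≤ k)
    (A : Fin k → Matrix (Fin r) (Fin r) ℝ)
    (hstoch : ∀ m, (∀ i j, 0 ≤ A m i j) ∧ ∀ i, ∑ j, A m i j = 1)
    (P : ℕ → Matrix (Fin r) (Fin r) ℝ)
    (hP0 : P 0 = 1)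
    (hPrec : ∀ m (hm : m < k), P (m + 1) = A ⟨m, hm⟩ * P m) :
    matDelta (P k) ≤ ∏ m, matLambda (A m) :=
  delta_prod_le_prod_lambda_general r k A hstoch P hP0 hPrec
end

section
/- Let A be a stochastic n×n real matrix such that the digraph G(A) (edge from i to j iff A_{ji} > 0, self-loops allowed) contains a spanning tree whose root vertex r has a self-loop, i.e. A_{rr} > 0 and every vertex of {1,…,n} is reachable from r along edges of G(A). Then A is SIA: there exists f ∈ ℝ^n such that A^k converges entrywise, as k → ∞, to the rank-one matrix 1 f^T all of whose rows equal f^T. -/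
/-!
Every vertex reaches the root `r` backwards along the tree, and the self-loop at `r` lets these
walks be padded to a common length `m`, so the column `r` of `A ^ m` is bounded below by some
`δ > 0`. Averaging with such a stochastic matrix shrinks the spread `max x - min x` of a vector by
the factor `1 - δ`, since every entry of the average gives weight at least `δ` to `x r`. Along
`A ^ k *ᵥ x` the maximum decreases, the minimum increases and the spread tends to zero, so each
column of `A ^ k` converges to a constant vector.
-/

open Filter Topology Finset Matrix

section Spread

variable {ι : Type*} [Fintype ι]

lemma mul_le_mulVec_apply {S : Matrix ι ι ℝ} (hS : ∀ i j, 0 ≤ S i j) {y : ι → ℝ}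
    (hy : ∀ i, 0 ≤ y i) (i w : ι) : S i w * y w ≤ (S *ᵥ y) i :=
  single_le_sum (f := fun w => S i w * y w) (fun w _ => mul_nonneg (hS i w) (hy w)) (mem_univ w)

variable [Nonempty ι]

noncomputable def maxEntry (x : ι → ℝ) : ℝ := univ.sup' univ_nonempty x

noncomputable def minEntry (x : ι → ℝ) : ℝ := univ.inf' univ_nonempty x

lemma le_maxEntry (x : ι → ℝ) (i : ι) : x i ≤ maxEntry x := le_sup' x (mem_univ i)

lemma minEntry_le (x : ι → ℝ) (i : ι) : minEntry x ≤ x i := inf'_le x (mem_univ i)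

lemma minEntry_le_maxEntry (x : ι → ℝ) : minEntry x ≤ maxEntry x :=
  (minEntry_le x (Classical.arbitrary ι)).trans (le_maxEntry x _)

lemma minEntry_pos {x : ι → ℝ} (hx : ∀ i, 0 < x i) : 0 < minEntry x :=
  (lt_inf'_iff _).2 fun i _ => hx i

variable [DecidableEq ι] {S : Matrix ι ι ℝ}

lemma mul_sub_le_maxEntry_sub_mulVec (hS : S ∈ rowStochastic ℝ ι) (x : ι → ℝ) (i w : ι) :
    S i w * (maxEntry x - x w) ≤ maxEntry x - (S *ᵥ x) i := by
  have h := mul_le_mulVec_apply hS.1 (y := maxEntry x • 1 - x)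
    (fun v => by simpa using le_maxEntry x v) i w
  simpa [mulVec_sub, mulVec_smul, one_vecMul_of_mem_rowStochastic hS] using h

lemma mul_sub_le_mulVec_sub_minEntry (hS : S ∈ rowStochastic ℝ ι) (x : ι → ℝ) (i w : ι) :
    S i w * (x w - minEntry x) ≤ (S *ᵥ x) i - minEntry x := by
  have h := mul_le_mulVec_apply hS.1 (y := x - minEntry x • 1)
    (fun v => by simpa using minEntry_le x v) i w
  simpa [mulVec_sub, mulVec_smul, one_vecMul_of_mem_rowStochastic hS] using h

lemma maxEntry_mulVec_le (hS : S ∈ rowStochastic ℝ ι) (x : ι → ℝ) :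
    maxEntry (S *ᵥ x) ≤ maxEntry x :=
  sup'_le _ _ fun i _ => sub_nonneg.1 <|
    (mul_nonneg (hS.1 i i) (sub_nonneg.2 (le_maxEntry x i))).trans
      (mul_sub_le_maxEntry_sub_mulVec hS x i i)

lemma minEntry_le_minEntry_mulVec (hS : S ∈ rowStochastic ℝ ι) (x : ι → ℝ) :
    minEntry x ≤ minEntry (S *ᵥ x) :=
  le_inf' _ _ fun i _ => sub_nonneg.1 <|
    (mul_nonneg (hS.1 i i) (sub_nonneg.2 (minEntry_le x i))).trans
      (mul_sub_le_mulVec_sub_minEntry hS x i i)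

lemma maxEntry_mulVec_sub_minEntry_mulVec_le (hS : S ∈ rowStochastic ℝ ι) {r : ι} {δ : ℝ}
    (hδ : ∀ i, δ ≤ S i r) (x : ι → ℝ) :
    maxEntry (S *ᵥ x) - minEntry (S *ᵥ x) ≤ (1 - δ) * (maxEntry x - minEntry x) := by
  have hmax : maxEntry (S *ᵥ x) ≤ maxEntry x - δ * (maxEntry x - x r) :=
    sup'_le _ _ fun i _ => by
      have := mul_le_mul_of_nonneg_right (hδ i) (sub_nonneg.2 (le_maxEntry x r))
      linarith [mul_sub_le_maxEntry_sub_mulVec hS x i r]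
  have hmin : minEntry x + δ * (x r - minEntry x) ≤ minEntry (S *ᵥ x) :=
    le_inf' _ _ fun i _ => by
      have := mul_le_mul_of_nonneg_right (hδ i) (sub_nonneg.2 (minEntry_le x r))
      linarith [mul_sub_le_mulVec_sub_minEntry hS x i r]
  linarith

lemma tendsto_zero_of_antitone_of_le_mul {u : ℕ → ℝ} (hu : Antitone u) (h0 : ∀ k, 0 ≤ u k)
    {m : ℕ} {q : ℝ} (hq : q < 1) (hstep : ∀ k, u (k + m) ≤ q * u k) :
    Tendsto u atTop (𝓝 0) := by
  have hL : Tendsto u atTop (𝓝 (⨅ k, u k)) :=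
    tendsto_atTop_ciInf hu ⟨0, by rintro _ ⟨k, rfl⟩; exact h0 k⟩
  have hle : ⨅ k, u k ≤ q * ⨅ k, u k :=
    le_of_tendsto_of_tendsto' (hL.comp (tendsto_add_atTop_nat m)) (hL.const_mul q) hstep
  have hL0 : 0 ≤ ⨅ k, u k := le_ciInf h0
  rwa [show ⨅ k, u k = 0 by nlinarith] at hL

theorem exists_tendsto_pow_mulVec (hS : S ∈ rowStochastic ℝ ι) {m : ℕ} {r : ι} {δ : ℝ}
    (hδ : 0 < δ) (hδr : ∀ i, δ ≤ (S ^ m) i r) (x : ι → ℝ) :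
    ∃ c, ∀ i, Tendsto (fun k => (S ^ k *ᵥ x) i) atTop (𝓝 c) := by
  set y : ℕ → ι → ℝ := fun k => S ^ k *ᵥ x
  have hy : ∀ k l, y (k + l) = S ^ l *ᵥ y k := fun k l => by
    simp only [y, mulVec_mulVec, ← pow_add, add_comm]
  have hmax : Antitone fun k => maxEntry (y k) := antitone_nat_of_succ_le fun k => by
    simpa only [hy k 1, pow_one] using maxEntry_mulVec_le hS (y k)
  have hmin : Monotone fun k => minEntry (y k) := monotone_nat_of_le_succ fun k => by
    simpa only [hy k 1, pow_one] using minEntry_le_minEntry_mulVec hS (y k)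
  have hspread : Tendsto (fun k => maxEntry (y k) - minEntry (y k)) atTop (𝓝 0) :=
    tendsto_zero_of_antitone_of_le_mul (fun a b hab => sub_le_sub (hmax hab) (hmin hab))
      (fun k => sub_nonneg.2 (minEntry_le_maxEntry _)) (by linarith : 1 - δ < 1) fun k => by
        rw [hy k m]
        exact maxEntry_mulVec_sub_minEntry_mulVec_le (pow_mem hS m) hδr (y k)
  obtain ⟨c, hc⟩ : ∃ c, Tendsto (fun k => maxEntry (y k)) atTop (𝓝 c) :=
    ⟨_, tendsto_atTop_ciInf hmax ⟨minEntry (y 0), by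
      rintro _ ⟨k, rfl⟩; exact (hmin k.zero_le).trans (minEntry_le_maxEntry _)⟩⟩
  have hc' : Tendsto (fun k => minEntry (y k)) atTop (𝓝 c) := by
    simpa using hc.sub hspread
  exact ⟨c, fun i => tendsto_of_tendsto_of_tendsto_of_le_of_le hc' hc
    (fun k => minEntry_le (y k) i) (fun k => le_maxEntry (y k) i)⟩

end Spread

section Reachability

variable {n : Type*} [Fintype n] [DecidableEq n] {A : Matrix n n ℝ}

lemma exists_pow_apply_pos_of_reflTransGen (hA : ∀ i j, 0 ≤ A i j) {r v : n}
    (h : Relation.ReflTransGen (fun i j => 0 < A j i) r v) : ∃ ℓ, 0 < (A ^ ℓ) v r := by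
  induction h with
  | refl => exact ⟨0, by simp⟩
  | tail _ hedge ih =>
    obtain ⟨ℓ, hℓ⟩ := ih
    refine ⟨ℓ + 1, ?_⟩
    rw [pow_succ', mul_apply]
    exact sum_pos' (fun w _ => mul_nonneg (hA _ w) (pow_apply_nonneg hA ℓ w _))
      ⟨_, mem_univ _, mul_pos hedge hℓ⟩

lemma pow_apply_pos_of_le (hA : ∀ i j, 0 ≤ A i j) {r v : n} (hr : 0 < A r r) {ℓ k : ℕ}
    (hℓk : ℓ ≤ k) (h : 0 < (A ^ ℓ) v r) : 0 < (A ^ k) v r := by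
  induction k, hℓk using Nat.le_induction with
  | base => exact h
  | succ k _ ih =>
    rw [pow_succ, mul_apply]
    exact sum_pos' (fun w _ => mul_nonneg (pow_apply_nonneg hA k v w) (hA w r))
      ⟨r, mem_univ r, mul_pos ih hr⟩

lemma exists_pow_forall_apply_pos (hA : ∀ i j, 0 ≤ A i j) {r : n} (hr : 0 < A r r)
    (hreach : ∀ v, Relation.ReflTransGen (fun i j => 0 < A j i) r v) :
    ∃ m, ∀ v, 0 < (A ^ m) v r := by
  choose ℓ hℓ using fun v => exists_pow_apply_pos_of_reflTransGen hA (hreach v)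
  exact ⟨univ.sup ℓ, fun v => pow_apply_pos_of_le hA hr (le_sup (mem_univ v)) (hℓ v)⟩

end Reachability

/-- If a stochastic matrix `A` has a digraph (edge from `i` to `j` iff `A j i > 0`)
containing a spanning tree whose root has a self-loop, then `A` is SIA: its powers
converge entrywise to a rank-one matrix `𝟙 fᵀ`. -/
theorem stochastic_spanning_tree_selfloop_isSIA
    (n : ℕ)
    (A : Matrix (Fin n) (Fin n) ℝ)
    (hnonneg : ∀ i j, 0 ≤ A i j)
    (hrow : ∀ i, ∑ j, A i j = 1)
    (r : Fin n) (hself : 0 < A r r)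
    (hreach : ∀ v : Fin n, Relation.ReflTransGen (fun i j : Fin n => 0 < A j i) r v) :
    ∃ f : Fin n → ℝ, ∀ i j, Tendsto (fun m => (A ^ m) i j) atTop (𝓝 (f j)) := by
  have hA : A ∈ rowStochastic ℝ (Fin n) := mem_rowStochastic_iff_sum.2 ⟨hnonneg, hrow⟩
  have : Nonempty (Fin n) := ⟨r⟩
  obtain ⟨m, hm⟩ := exists_pow_forall_apply_pos hnonneg hself hreach
  choose f hf using fun j =>
    exists_tendsto_pow_mulVec hA (minEntry_pos hm) (minEntry_le _) (Pi.single j 1)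
  exact ⟨f, fun i j => by simpa [mulVec_single_one] using hf j i⟩
end

section
/- Let A be a stochastic n×n real matrix such that the digraph G(A) (edge from i to j iff A_{ji} > 0) contains a spanning tree whose root vertex r satisfies A_{rr} > 0 (every vertex is reachable from r). Then 1 is an eigenvalue of A of algebraic multiplicity one, and every other complex eigenvalue μ of A satisfies |μ| < 1. -/
/-!
Give `ℂⁿ` the sup norm. A stochastic matrix `A` does not increase it, so every eigenvalue has
`|μ| ≤ 1`. If `A x = μ x` with `|μ| = 1` and `|x i|` is maximal, then `μ x i` is a convex
combination of the `x j` with `A i j > 0`, all of modulus at most `|x i|`, so these `x j` equal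
`μ x i` and have maximal modulus too. Going backwards along the edges of the spanning tree, the
maximum is attained at the root `r`, where the self-loop gives `x r = μ x r`, hence `μ = 1`. For
`μ = 1` the same argument applied to `x - x r • 1` shows that the eigenspace is spanned by `1`.
There is no Jordan chain either: `A x = x + c • 1` gives `A ^ m x = x + m c • 1`, which stays
bounded only if `c = 0`. So the maximal generalized eigenspace of `1`, whose dimension is the
algebraic multiplicity, is the line spanned by `1`.
-/

open Finset Matrix Module

theorem exists_norm_apply_eq_norm {ι E : Type*} [Fintype ι] [Nonempty ι]
    [SeminormedAddCommGroup E] (x : ι → E) : ∃ i, ‖x i‖ = ‖x‖ := by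
  obtain ⟨i, -, hi⟩ := exists_mem_eq_sup univ univ_nonempty fun i ↦ ‖x i‖₊
  exact ⟨i, by rw [← coe_nnnorm, ← coe_nnnorm, Pi.nnnorm_def, hi]⟩

theorem Module.End.maxGenEigenspace_eq_eigenspace {R M : Type*} [CommRing R] [AddCommGroup M]
    [Module R M] {f : End R M} {μ : R}
    (h : ∀ x, f x - μ • x ∈ f.eigenspace μ → x ∈ f.eigenspace μ) :
    f.maxGenEigenspace μ = f.eigenspace μ := by
  have mem_of_pow (k : ℕ) : ∀ x, ((f - μ • 1) ^ k) x = 0 → x ∈ f.eigenspace μ := by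
    induction k with
    | zero => simp
    | succ k ih =>
      intro x hx
      rw [pow_succ, End.mul_apply] at hx
      exact h x (ih _ hx)
  refine le_antisymm (fun x hx ↦ ?_) End.eigenspace_le_maxGenEigenspace
  obtain ⟨k, hk⟩ := (f.mem_maxGenEigenspace μ x).1 hx
  exact mem_of_pow k x hk

namespace Matrix

variable {ι : Type*} [Fintype ι]

theorem map_ofReal_mulVec_apply (A : Matrix ι ι ℝ) (x : ι → ℂ) (i : ι) :
    (A.map Complex.ofReal *ᵥ x) i = ∑ j, A i j • x j := by
  simp [mulVec, dotProduct, Complex.real_smul]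

variable [DecidableEq ι] {A : Matrix ι ι ℝ}

theorem map_ofReal_mulVec_one (hA : A ∈ rowStochastic ℝ ι) :
    A.map Complex.ofReal *ᵥ 1 = 1 := by
  ext i
  simp [map_ofReal_mulVec_apply, Complex.real_smul, ← Complex.ofReal_sum,
    sum_row_of_mem_rowStochastic hA]

theorem norm_map_ofReal_mulVec_le (hA : A ∈ rowStochastic ℝ ι) (x : ι → ℂ) :
    ‖A.map Complex.ofReal *ᵥ x‖ ≤ ‖x‖ := by
  refine (pi_norm_le_iff_of_nonneg (norm_nonneg x)).2 fun i ↦ ?_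
  calc ‖(A.map Complex.ofReal *ᵥ x) i‖ ≤ ∑ j, A i j * ‖x j‖ := by
        rw [map_ofReal_mulVec_apply]
        refine (norm_sum_le _ _).trans_eq (sum_congr rfl fun j _ ↦ ?_)
        rw [norm_smul, Real.norm_of_nonneg (nonneg_of_mem_rowStochastic hA)]
    _ ≤ ∑ j, A i j * ‖x‖ := by
        gcongr with j
        exacts [nonneg_of_mem_rowStochastic hA, norm_le_pi_norm x j]
    _ = ‖x‖ := by rw [← sum_mul, sum_row_of_mem_rowStochastic hA, one_mul]

theorem apply_eq_mul_of_mulVec_eq_smul (hA : A ∈ rowStochastic ℝ ι) {x : ι → ℂ} {μ : ℂ}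
    (hx : A.map Complex.ofReal *ᵥ x = μ • x) (hμ : ‖μ‖ = 1) {i j : ι} (hi : ‖x i‖ = ‖x‖)
    (hij : 0 < A i j) : x j = μ * x i := by
  set w := μ * x i
  have hw : ‖w‖ = ‖x‖ := by rw [norm_mul, hμ, one_mul, hi]
  have hle (k : ι) : inner ℝ (x k) w ≤ ‖x‖ ^ 2 := calc
    inner ℝ (x k) w ≤ ‖x k‖ * ‖w‖ := real_inner_le_norm _ _
    _ ≤ ‖x‖ * ‖x‖ := by rw [hw]; gcongr; exact norm_le_pi_norm x k
    _ = ‖x‖ ^ 2 := (sq _).symm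
  have hsum : ∑ k, A i k * inner ℝ (x k) w = ∑ k, A i k * ‖x‖ ^ 2 := by
    have hwi : ∑ k, A i k • x k = w := by rw [← map_ofReal_mulVec_apply, hx]; rfl
    rw [← sum_mul, sum_row_of_mem_rowStochastic hA, one_mul, ← hw, ← real_inner_self_eq_norm_sq]
    simp only [← real_inner_smul_left, ← sum_inner, hwi]
  have hj := (sum_eq_sum_iff_of_le fun k _ ↦ mul_le_mul_of_nonneg_left (hle k)
    (nonneg_of_mem_rowStochastic hA)).1 hsum j (mem_univ j)
  refine eq_of_norm_le_re_inner_eq_norm_sq (𝕜 := ℝ) (hw ▸ norm_le_pi_norm x j) ?_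
  rw [hw]
  exact mul_left_cancel₀ hij.ne' hj

theorem norm_apply_eq_norm_of_reflTransGen (hA : A ∈ rowStochastic ℝ ι) {x : ι → ℂ} {μ : ℂ}
    (hx : A.map Complex.ofReal *ᵥ x = μ • x) (hμ : ‖μ‖ = 1) {r v : ι}
    (hrv : Relation.ReflTransGen (fun i j ↦ 0 < A j i) r v) (hv : ‖x v‖ = ‖x‖) :
    ‖x r‖ = ‖x‖ := by
  induction hrv with
  | refl => exact hv
  | tail _ hcb ih =>
    exact ih <| by rw [apply_eq_mul_of_mulVec_eq_smul hA hx hμ hv hcb, norm_mul, hμ, one_mul, hv]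

theorem norm_apply_root_eq_norm (hA : A ∈ rowStochastic ℝ ι) {r : ι}
    (hreach : ∀ v, Relation.ReflTransGen (fun i j ↦ 0 < A j i) r v) {x : ι → ℂ} {μ : ℂ}
    (hx : A.map Complex.ofReal *ᵥ x = μ • x) (hμ : ‖μ‖ = 1) : ‖x r‖ = ‖x‖ := by
  have : Nonempty ι := ⟨r⟩
  obtain ⟨v, hv⟩ := exists_norm_apply_eq_norm x
  exact norm_apply_eq_norm_of_reflTransGen hA hx hμ (hreach v) hv

theorem norm_le_one_of_mulVec_eq_smul (hA : A ∈ rowStochastic ℝ ι) {x : ι → ℂ} {μ : ℂ}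
    (hx : A.map Complex.ofReal *ᵥ x = μ • x) (hx0 : x ≠ 0) : ‖μ‖ ≤ 1 := by
  have := norm_map_ofReal_mulVec_le hA x
  rw [hx, norm_smul] at this
  exact (mul_le_iff_le_one_left (norm_pos_iff.2 hx0)).1 this

theorem eq_one_of_mulVec_eq_smul (hA : A ∈ rowStochastic ℝ ι) {r : ι} (hself : 0 < A r r)
    (hreach : ∀ v, Relation.ReflTransGen (fun i j ↦ 0 < A j i) r v) {x : ι → ℂ} {μ : ℂ}
    (hx : A.map Complex.ofReal *ᵥ x = μ • x) (hx0 : x ≠ 0) (hμ : ‖μ‖ = 1) : μ = 1 := by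
  have hr := norm_apply_root_eq_norm hA hreach hx hμ
  have hxr : x r ≠ 0 := norm_ne_zero_iff.1 (hr ▸ norm_ne_zero_iff.2 hx0)
  exact mul_right_cancel₀ hxr (by rw [one_mul, ← apply_eq_mul_of_mulVec_eq_smul hA hx hμ hr hself])

theorem eq_smul_one_of_mulVec_eq_self (hA : A ∈ rowStochastic ℝ ι) {r : ι}
    (hreach : ∀ v, Relation.ReflTransGen (fun i j ↦ 0 < A j i) r v) {x : ι → ℂ}
    (hx : A.map Complex.ofReal *ᵥ x = x) : x = x r • 1 := by
  set z := x - x r • 1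
  have hz : A.map Complex.ofReal *ᵥ z = (1 : ℂ) • z := by
    rw [one_smul, mulVec_sub, mulVec_smul, hx, map_ofReal_mulVec_one hA]
  have hz0 : ‖z‖ = 0 := by
    rw [← norm_apply_root_eq_norm hA hreach hz norm_one]
    simp [z]
  exact sub_eq_zero.1 (norm_eq_zero.1 hz0)

theorem eq_zero_of_mulVec_eq_add_smul_one [Nonempty ι] (hA : A ∈ rowStochastic ℝ ι)
    {x : ι → ℂ} {c : ℂ} (hx : A.map Complex.ofReal *ᵥ x = x + c • 1) : c = 0 := by
  have hpow (m : ℕ) : (A.map Complex.ofReal) ^ m *ᵥ x = x + (m * c) • 1 := by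
    induction m with
    | zero => simp
    | succ m ih =>
      rw [pow_succ', ← mulVec_mulVec, ih, mulVec_add, hx, mulVec_smul, map_ofReal_mulVec_one hA]
      push_cast
      module
  have hbound (m : ℕ) : m * ‖c‖ ≤ 2 * ‖x‖ := calc
    m * ‖c‖ = ‖(m * c) • (1 : ι → ℂ)‖ := by
      rw [norm_smul, norm_one, mul_one, norm_mul, Complex.norm_natCast]
    _ ≤ ‖x + (m * c) • 1‖ + ‖x‖ := by rw [add_comm x]; exact norm_le_add_norm_add _ _
    _ ≤ ‖x‖ + ‖x‖ := by
      rw [← hpow]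
      gcongr
      exact (Matrix.map_pow A Complex.ofRealHom m).symm ▸
        norm_map_ofReal_mulVec_le (pow_mem hA m) x
    _ = 2 * ‖x‖ := by ring
  by_contra hc
  obtain ⟨m, hm⟩ := exists_nat_gt (2 * ‖x‖ / ‖c‖)
  exact (hbound m).not_gt ((div_lt_iff₀ (norm_pos_iff.2 hc)).1 hm)

theorem eigenspace_toLin'_map_ofReal_one (hA : A ∈ rowStochastic ℝ ι) {r : ι}
    (hreach : ∀ v, Relation.ReflTransGen (fun i j ↦ 0 < A j i) r v) :
    End.eigenspace (toLin' (A.map Complex.ofReal)) 1 = Submodule.span ℂ {1} := by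
  ext x
  rw [End.mem_eigenspace_iff, toLin'_apply, one_smul, Submodule.mem_span_singleton]
  constructor
  · exact fun hx ↦ ⟨x r, (eq_smul_one_of_mulVec_eq_self hA hreach hx).symm⟩
  · rintro ⟨c, rfl⟩
    rw [mulVec_smul, map_ofReal_mulVec_one hA]

theorem maxGenEigenspace_toLin'_map_ofReal_one (hA : A ∈ rowStochastic ℝ ι) {r : ι}
    (hreach : ∀ v, Relation.ReflTransGen (fun i j ↦ 0 < A j i) r v) :
    End.maxGenEigenspace (toLin' (A.map Complex.ofReal)) 1 = Submodule.span ℂ {1} := by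
  have : Nonempty ι := ⟨r⟩
  rw [End.maxGenEigenspace_eq_eigenspace, eigenspace_toLin'_map_ofReal_one hA hreach]
  intro x hx
  obtain ⟨c, hc⟩ := Submodule.mem_span_singleton.1 (eigenspace_toLin'_map_ofReal_one hA hreach ▸ hx)
  rw [toLin'_apply, one_smul, eq_sub_iff_add_eq'] at hc
  rw [End.mem_eigenspace_iff, toLin'_apply, one_smul, ← hc,
    eq_zero_of_mulVec_eq_add_smul_one hA hc.symm, zero_smul, add_zero]

end Matrix

/-- If a stochastic matrix `A` has a digraph (edge from `i` to `j` iff `A j i > 0`)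
containing a spanning tree whose root has a self-loop, then `1` is an eigenvalue of `A`
of algebraic multiplicity one and every other complex eigenvalue `μ` satisfies `|μ| < 1`. -/
theorem spanning_tree_selfloop_eigenvalues
    (n : ℕ)
    (A : Matrix (Fin n) (Fin n) ℝ)
    (hnonneg : ∀ i j, 0 ≤ A i j)
    (hrow : ∀ i, ∑ j, A i j = 1)
    (r : Fin n) (hself : 0 < A r r)
    (hreach : ∀ v : Fin n, Relation.ReflTransGen (fun i j : Fin n => 0 < A j i) r v) :
    Polynomial.rootMultiplicity 1 (Matrix.charpoly (A.map Complex.ofReal)) = 1 ∧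
    ∀ μ : ℂ, μ ≠ 1 → (Matrix.charpoly (A.map Complex.ofReal)).IsRoot μ →
      ‖μ‖ < 1 := by
  have hA : A ∈ rowStochastic ℝ (Fin n) := mem_rowStochastic_iff_sum.2 ⟨hnonneg, hrow⟩
  refine ⟨?_, fun μ hμ1 hroot ↦ ?_⟩
  · rw [← charpoly_toLin', ← LinearMap.finrank_maxGenEigenspace_eq,
      maxGenEigenspace_toLin'_map_ofReal_one hA hreach]
    have : Nonempty (Fin n) := ⟨r⟩
    exact finrank_span_singleton one_ne_zero
  · rw [← charpoly_toLin', ← End.hasEigenvalue_iff_isRoot_charpoly] at hroot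
    obtain ⟨x, hx⟩ := hroot.exists_hasEigenvector
    have hAx : A.map Complex.ofReal *ᵥ x = μ • x := by rw [← toLin'_apply]; exact hx.apply_eq_smul
    exact (norm_le_one_of_mulVec_eq_smul hA hAx hx.2).lt_of_ne fun h ↦
      hμ1 (eq_one_of_mulVec_eq_smul hA hself hreach hAx hx.2 h)
end

section
/- Let m ≥ 2, n ≥ 1, and let A_1, …, A_m be nonnegative n×n real matrices. Let M_0 be the mn×mn block matrix (blocks indexed by {0,…,m−1}) whose block row 0 has the n×n identity in block column 0, whose block row s (1 ≤ s ≤ m−1) has the identity in block column s−1, and all other blocks zero; let N be the mn×mn matrix whose block row 0 is (A_1, A_2, …, A_m) and all other block rows are zero; and for 1 ≤ i ≤ m−1 set M_i = M_0^i + N. If the digraph of the n×n matrix I + A_1 + ⋯ + A_m (the sum of the blocks in the first block row of M_i) contains a spanning tree, then the digraph of M_i contains a spanning tree whose root vertex has a self-loop, i.e., there exists a vertex u of {1,…,mn} with (M_i)_{uu} > 0 such that every vertex is reachable from u along edges of the digraph of M_i. -/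
/-!
`M₀` moves block `k` to block `k - 1` (and fixes block `0`), so `M₀ ^ i` is the matrix of the
map `(k, x) ↦ (k - i, x)` with truncated subtraction. In the digraph of `Mᵢ` this gives an edge
from `(k - i, x)` to `(k, x)`, hence every vertex `(k, x)` is reachable from `(0, x)`, and a
self-loop at every vertex of block `0`. An edge `x → y` of the digraph of `I + ∑ A_s` with
`x ≠ y` comes from some `A_s` and is realised by the detour `(0, x) → (s, x) → (0, y)`.
So the root of a spanning tree of that digraph, placed in block `0`, is a root for `Mᵢ`.
-/

/-- The `mn × mn` block matrix `M₀` (blocks indexed by `Fin m`): block row `0` has the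
`n × n` identity in block column `0`, block row `s` (`1 ≤ s ≤ m - 1`) has the identity in
block column `s - 1`, and all other blocks are zero. -/
def blockM0 (m n : ℕ) : Matrix (Fin m × Fin n) (Fin m × Fin n) ℝ :=
  Matrix.of fun u v =>
    if u.2 = v.2 ∧ ((u.1.val = 0 ∧ v.1.val = 0) ∨ u.1.val = v.1.val + 1) then 1 else 0

/-- The `mn × mn` matrix `N` whose block row `0` is `(A_1, A_2, …, A_m)` and whose other
block rows are zero. -/
def blockN (m n : ℕ) (A : Fin m → Matrix (Fin n) (Fin n) ℝ) :
    Matrix (Fin m × Fin n) (Fin m × Fin n) ℝ :=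
  Matrix.of fun u v => if u.1.val = 0 then A v.1 u.2 v.2 else 0

open Matrix Relation

def Matrix.digraphAdj {ι R : Type*} [Zero R] [LT R] (B : Matrix ι ι R) (p q : ι) : Prop :=
  0 < B q p

theorem Matrix.one_submatrix_id_pow {ι R : Type*} [Fintype ι] [DecidableEq ι] [Semiring R]
    (f : ι → ι) (k : ℕ) :
    (1 : Matrix ι ι R).submatrix f id ^ k = (1 : Matrix ι ι R).submatrix f^[k] id := by
  induction k with
  | zero => simp
  | succ k ih =>
    rw [pow_succ', ih]
    exact one_submatrix_mul f (Equiv.refl ι) _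

theorem eq_or_exists_pos_of_one_add_sum_pos {ι κ R : Type*} [Fintype κ] [DecidableEq ι]
    [Semiring R] [LinearOrder R] [IsOrderedAddMonoid R]
    {A : κ → Matrix ι ι R} {x y : ι} (h : 0 < ((1 : Matrix ι ι R) + ∑ s, A s) y x) :
    y = x ∨ ∃ s, 0 < A s y x := by
  by_contra! hcon
  rw [Matrix.add_apply, one_apply_ne hcon.1, zero_add, Matrix.sum_apply] at h
  exact h.not_ge (Finset.sum_nonpos fun s _ => hcon.2 s)

def blockShift (m n i : ℕ) (u : Fin m × Fin n) : Fin m × Fin n :=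
  (⟨u.1 - i, (Nat.sub_le _ _).trans_lt u.1.isLt⟩, u.2)

theorem blockShift_zero_fst {m n : ℕ} (i : ℕ) (hm : 0 < m) (x : Fin n) :
    blockShift m n i (⟨0, hm⟩, x) = (⟨0, hm⟩, x) := by
  simp [blockShift]

theorem blockShift_iterate (m n k : ℕ) : (blockShift m n 1)^[k] = blockShift m n k := by
  induction k with
  | zero => rfl
  | succ k ih =>
    funext u
    rw [Function.iterate_succ_apply', ih]
    simp [blockShift, Nat.sub_sub]

theorem blockM0_eq_submatrix (m n : ℕ) :
    blockM0 m n =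
      (1 : Matrix (Fin m × Fin n) (Fin m × Fin n) ℝ).submatrix (blockShift m n 1) id := by
  ext u v
  simp only [blockM0, blockShift, of_apply, submatrix_apply, id, one_apply, Prod.ext_iff,
    Fin.ext_iff]
  congr 1
  apply propext
  omega

theorem blockM0_pow (m n i : ℕ) :
    blockM0 m n ^ i =
      (1 : Matrix (Fin m × Fin n) (Fin m × Fin n) ℝ).submatrix (blockShift m n i) id := by
  rw [blockM0_eq_submatrix, one_submatrix_id_pow, blockShift_iterate]

theorem reflTransGen_blockShift {m n i : ℕ} (hi : 1 ≤ i)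
    {r : Fin m × Fin n → Fin m × Fin n → Prop}
    (hr : ∀ u, r (blockShift m n i u) u) (u : Fin m × Fin n) :
    ReflTransGen r (⟨0, u.1.pos⟩, u.2) u := by
  obtain ⟨⟨k, hk⟩, x⟩ := u
  induction k using Nat.strong_induction_on with
  | _ k ih =>
    by_cases hki : k ≤ i
    · have hshift : blockShift m n i (⟨k, hk⟩, x) = (⟨0, hk.pos⟩, x) := by
        simp [blockShift, Nat.sub_eq_zero_of_le hki]
      exact .single (hshift ▸ hr _)
    · exact (ih (k - i) (by omega) ((Nat.sub_le _ _).trans_lt hk)).tail (hr (⟨k, hk⟩, x))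

section blockMi

variable {m n : ℕ} {A : Fin m → Matrix (Fin n) (Fin n) ℝ} {i : ℕ}

theorem blockN_nonneg (hA : ∀ s x y, 0 ≤ A s x y) (u v : Fin m × Fin n) :
    0 ≤ blockN m n A u v := by
  rw [blockN, of_apply]
  split_ifs
  exacts [hA _ _ _, le_rfl]

theorem digraphAdj_blockShift (hA : ∀ s x y, 0 ≤ A s x y) (u : Fin m × Fin n) :
    (blockM0 m n ^ i + blockN m n A).digraphAdj (blockShift m n i u) u := by
  have hpow : (blockM0 m n ^ i) u (blockShift m n i u) = 1 := by
    rw [blockM0_pow, submatrix_apply, id, one_apply_eq]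
  exact add_pos_of_pos_of_nonneg (hpow ▸ one_pos) (blockN_nonneg hA _ _)

theorem digraphAdj_blockN {s : Fin m} {x y : Fin n} (h : 0 < A s y x) :
    (blockM0 m n ^ i + blockN m n A).digraphAdj (s, x) (⟨0, s.pos⟩, y) := by
  have hpow : 0 ≤ (blockM0 m n ^ i) (⟨0, s.pos⟩, y) (s, x) := by
    rw [blockM0_pow, submatrix_apply, one_apply]
    split_ifs <;> norm_num
  exact add_pos_of_nonneg_of_pos hpow (by simpa [blockN] using h)

theorem reflTransGen_digraphAdj_block_zero (hA : ∀ s x y, 0 ≤ A s x y) (hi : 1 ≤ i)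
    (hm : 0 < m) {x y : Fin n}
    (h : ReflTransGen ((1 + ∑ s, A s).digraphAdj) x y) :
    ReflTransGen (blockM0 m n ^ i + blockN m n A).digraphAdj (⟨0, hm⟩, x) (⟨0, hm⟩, y) := by
  refine ReflTransGen.lift' (fun x : Fin n => ((⟨0, hm⟩ : Fin m), x)) (fun x y hxy => ?_) _ _ h
  rcases eq_or_exists_pos_of_one_add_sum_pos hxy with rfl | ⟨s, hs⟩
  · exact .refl
  · exact (reflTransGen_blockShift hi (digraphAdj_blockShift hA) (s, x)).tail
      (digraphAdj_blockN hs)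

end blockMi

theorem Mi_contains_spanning_tree_with_selfloop_root_general
    (m n : ℕ) (hm : 2 ≤ m)
    (A : Fin m → Matrix (Fin n) (Fin n) ℝ)
    (hA : ∀ s i j, 0 ≤ A s i j)
    (i : ℕ) (hi1 : 1 ≤ i)
    (hspan : ∃ root : Fin n, ∀ v : Fin n,
      Relation.ReflTransGen
        (fun p q : Fin n => 0 < ((1 : Matrix (Fin n) (Fin n) ℝ) + ∑ s, A s) q p)
        root v) :
    ∃ u : Fin m × Fin n,
      0 < ((blockM0 m n) ^ i + blockN m n A) u u ∧
      ∀ v : Fin m × Fin n,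
        Relation.ReflTransGen
          (fun p q : Fin m × Fin n => 0 < ((blockM0 m n) ^ i + blockN m n A) q p)
          u v := by
  obtain ⟨root, hroot⟩ := hspan
  have hm0 : 0 < m := by omega
  have hloop := digraphAdj_blockShift (i := i) hA (⟨0, hm0⟩, root)
  rw [blockShift_zero_fst] at hloop
  refine ⟨(⟨0, hm0⟩, root), hloop, fun v => ?_⟩
  exact (reflTransGen_digraphAdj_block_zero hA hi1 hm0 (hroot v.2)).trans
    (reflTransGen_blockShift hi1 (digraphAdj_blockShift hA) v)

/-- If the digraph of `I + A_1 + ⋯ + A_m` contains a spanning tree, then the digraph of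
`M_i = M₀^i + N` (for `1 ≤ i ≤ m - 1`) contains a spanning tree whose root vertex has a
self-loop. Edges: from `p` to `q` iff the `(q, p)` entry is positive. -/
theorem Mi_contains_spanning_tree_with_selfloop_root
    (m n : ℕ) (hm : 2 ≤ m) (hn : 1 ≤ n)
    (A : Fin m → Matrix (Fin n) (Fin n) ℝ)
    (hA : ∀ s i j, 0 ≤ A s i j)
    (i : ℕ) (hi1 : 1 ≤ i) (him : i ≤ m - 1)
    (hspan : ∃ root : Fin n, ∀ v : Fin n,
      Relation.ReflTransGen
        (fun p q : Fin n => 0 < ((1 : Matrix (Fin n) (Fin n) ℝ) + ∑ s, A s) q p)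
        root v) :
    ∃ u : Fin m × Fin n,
      0 < ((blockM0 m n) ^ i + blockN m n A) u u ∧
      ∀ v : Fin m × Fin n,
        Relation.ReflTransGen
          (fun p q : Fin m × Fin n => 0 < ((blockM0 m n) ^ i + blockN m n A) q p)
          u v :=
  Mi_contains_spanning_tree_with_selfloop_root_general m n hm A hA i hi1 hspan
end

section
/- Let m ≥ 2, n ≥ 1, ℓ ≥ 1, and reals 0 < τ̂_v ≤ τ̂. Let M_0 be the mn×mn block matrix whose block row 0 has the n×n identity in block column 0, whose block row s (1 ≤ s ≤ m−1) has the identity in block column s−1, and all other blocks zero. For i = 1, …, ℓ let D_i be an mn×mn matrix whose block row 0 consists of nonnegative n×n blocks (A_{i1}, …, A_{im}) and whose other block rows are zero, and let h_i ∈ (0, τ̂]. Let H ⊆ {1,…,ℓ} be such that h_s ≥ τ̂_v for all s ∈ H. Then, with factors ordered so that the i = 1 factor is applied first (rightmost), the product (e^{−h_ℓ} M_0 + (1 − e^{−h_ℓ}) D_ℓ) ⋯ (e^{−h_1} M_0 + (1 − e^{−h_1}) D_1) is entrywise ≥ min{ e^{−ℓτ̂}, e^{−(ℓ−1)τ̂}(1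 − e^{−τ̂_v}) } · ( M_0^ℓ + Σ_{i∈H} D_i M_0^{i−1} ). -/
namespace Matrix

variable {l m n R : Type*} [Fintype m] [Semiring R]

theorem mul_apply_eq_zero_of_row_eq_zero {A : Matrix l m R} {i : l} (hA : ∀ j, A i j = 0)
    (B : Matrix m n R) (k : n) : (A * B) i k = 0 :=
  Finset.sum_eq_zero fun j _ => mul_eq_zero_of_left (hA j) _

variable [PartialOrder R] [IsOrderedRing R]

theorem mul_apply_nonneg {A : Matrix l m R} {B : Matrix m n R}
    (hA : ∀ i j, 0 ≤ A i j) (hB : ∀ i j, 0 ≤ B i j) (i : l) (k : n) : 0 ≤ (A * B) i k :=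
  Finset.sum_nonneg fun j _ => mul_nonneg (hA i j) (hB j k)

theorem mul_apply_le_mul_apply {A : Matrix l m R} {B C : Matrix m n R}
    (hA : ∀ i j, 0 ≤ A i j) (hBC : ∀ i j, B i j ≤ C i j) (i : l) (k : n) :
    (A * B) i k ≤ (A * C) i k :=
  Finset.sum_le_sum fun j _ => mul_le_mul_of_nonneg_left (hBC j k) (hA i j)

end Matrix

theorem Finset.mul_sum_le_sum_mul_of_subset {ι R : Type*} [Semiring R] [PartialOrder R]
    [IsOrderedRing R] {s t : Finset ι} (hst : s ⊆ t) {c : R} {f g : ι → R}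
    (hc : ∀ i ∈ s, c ≤ g i) (hg : ∀ i ∈ t, 0 ≤ g i) (hf : ∀ i ∈ t, 0 ≤ f i) :
    c * ∑ i ∈ s, f i ≤ ∑ i ∈ t, g i * f i := by
  rw [Finset.mul_sum]
  calc ∑ i ∈ s, c * f i ≤ ∑ i ∈ s, g i * f i :=
        Finset.sum_le_sum fun i hi => mul_le_mul_of_nonneg_right (hc i hi) (hf i (hst hi))
    _ ≤ ∑ i ∈ t, g i * f i :=
        Finset.sum_le_sum_of_subset_of_nonneg hst fun i hi _ => mul_nonneg (hg i hi) (hf i hi)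

open Matrix

section BlockM0

variable {m n : ℕ}

theorem blockM0_nonneg (u v : Fin m × Fin n) : 0 ≤ blockM0 m n u v := by
  simp only [blockM0, of_apply]
  split_ifs <;> norm_num

theorem blockM0_row_of_fst_eq_zero {u : Fin m × Fin n} (hu : u.1.val = 0) :
    blockM0 m n u = (1 : Matrix (Fin m × Fin n) (Fin m × Fin n) ℝ) u := by
  ext w
  simp only [blockM0, of_apply, one_apply, Prod.ext_iff, Fin.ext_iff]
  congr 1
  apply propext
  omega

theorem le_blockM0_mul_apply {X : Matrix (Fin m × Fin n) (Fin m × Fin n) ℝ}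
    (hX : ∀ u v, 0 ≤ X u v) (hX0 : ∀ u v, u.1.val ≠ 0 → X u v = 0) (u v : Fin m × Fin n) :
    X u v ≤ (blockM0 m n * X) u v := by
  by_cases hu : u.1.val = 0
  · rw [mul_apply', blockM0_row_of_fst_eq_zero hu, ← mul_apply', one_mul]
  · rw [hX0 u v hu]
    exact mul_apply_nonneg blockM0_nonneg hX u v

theorem le_blockM0_step_mul_apply {D S : Matrix (Fin m × Fin n) (Fin m × Fin n) ℝ}
    (hD : ∀ u v, 0 ≤ D u v) (hS : ∀ u v, 0 ≤ S u v) (hS0 : ∀ u v, u.1.val ≠ 0 → S u v = 0)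
    {a b : ℝ} (ha : 0 ≤ a) (hb : 0 ≤ b) (x : ℝ) (k : ℕ) (u v : Fin m × Fin n) :
    a * x * (blockM0 m n ^ (k + 1)) u v + b * x * (D * blockM0 m n ^ k) u v + a * S u v
      ≤ ((a • blockM0 m n + b • D) * (x • blockM0 m n ^ k + S)) u v := by
  have hMS := le_blockM0_mul_apply hS hS0 u v
  have hDS := mul_apply_nonneg hD hS u v
  simp only [Matrix.add_mul, Matrix.mul_add, Matrix.smul_mul, Matrix.mul_smul, ← pow_succ',
    Matrix.add_apply, Matrix.smul_apply, smul_eq_mul]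
  nlinarith [mul_le_mul_of_nonneg_left hMS ha, mul_nonneg hb hDS]

theorem smul_pow_add_sum_le_smul_product {D P : ℕ → Matrix (Fin m × Fin n) (Fin m × Fin n) ℝ}
    {a b : ℕ → ℝ} {ℓ : ℕ} {α : ℝ} (hα : 0 ≤ α)
    (ha : ∀ i ∈ Finset.Icc 1 ℓ, α ≤ a i) (hb : ∀ i ∈ Finset.Icc 1 ℓ, 0 ≤ b i)
    (hD : ∀ i ∈ Finset.Icc 1 ℓ, ∀ u v, 0 ≤ D i u v)
    (hD0 : ∀ i ∈ Finset.Icc 1 ℓ, ∀ u v : Fin m × Fin n, u.1.val ≠ 0 → D i u v = 0)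
    (hP0 : P 0 = 1)
    (hP : ∀ i < ℓ, P (i + 1) = (a (i + 1) • blockM0 m n + b (i + 1) • D (i + 1)) * P i)
    {k : ℕ} (hk : k ≤ ℓ) (u v : Fin m × Fin n) :
    (α ^ (k + 1) • blockM0 m n ^ k
      + α ^ k • ∑ i ∈ Finset.Icc 1 k, b i • (D i * blockM0 m n ^ (i - 1))) u v
      ≤ α * P k u v := by
  induction k generalizing u v with
  | zero => simp [hP0]
  | succ k ih =>
    have hk1 : k + 1 ∈ Finset.Icc 1 ℓ := Finset.mem_Icc.mpr ⟨k.succ_pos, hk⟩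
    have hIcc : Finset.Icc 1 k ⊆ Finset.Icc 1 ℓ := Finset.Icc_subset_Icc_right (by omega)
    set S := α ^ k • ∑ i ∈ Finset.Icc 1 k, b i • (D i * blockM0 m n ^ (i - 1))
    have hS : ∀ u v, 0 ≤ S u v := fun u v => by
      simp only [S, Matrix.smul_apply, Matrix.sum_apply, smul_eq_mul]
      exact mul_nonneg (pow_nonneg hα k) <| Finset.sum_nonneg fun i hi =>
        mul_nonneg (hb i (hIcc hi))
          (mul_apply_nonneg (hD i (hIcc hi)) (pow_apply_nonneg blockM0_nonneg _) u v)
    have hS0 : ∀ u v, u.1.val ≠ 0 → S u v = 0 := fun u v hu => by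
      simp only [S, Matrix.smul_apply, Matrix.sum_apply, smul_eq_mul]
      rw [Finset.sum_eq_zero fun i hi => by
        rw [mul_apply_eq_zero_of_row_eq_zero (hD0 i (hIcc hi) u · hu), mul_zero], mul_zero]
    have hF : ∀ u v, 0 ≤ (a (k + 1) • blockM0 m n + b (k + 1) • D (k + 1)) u v := fun u v =>
      add_nonneg (mul_nonneg (hα.trans (ha _ hk1)) (blockM0_nonneg u v))
        (mul_nonneg (hb _ hk1) (hD _ hk1 u v))
    calc _ = α * α ^ (k + 1) * (blockM0 m n ^ (k + 1)) u v
          + b (k + 1) * α ^ (k + 1) * (D (k + 1) * blockM0 m n ^ k) u v + α * S u v := by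
          simp only [S, Finset.sum_Icc_succ_top (Nat.le_add_left 1 k), Matrix.add_apply,
            Matrix.smul_apply, Matrix.sum_apply, smul_eq_mul, Nat.add_sub_cancel]
          ring
      _ ≤ a (k + 1) * α ^ (k + 1) * (blockM0 m n ^ (k + 1)) u v
          + b (k + 1) * α ^ (k + 1) * (D (k + 1) * blockM0 m n ^ k) u v + a (k + 1) * S u v := by
          have hαa := ha _ hk1
          have hM := pow_apply_nonneg blockM0_nonneg (k + 1) u v
          gcongr
          exact hS u v
      _ ≤ _ :=
          le_blockM0_step_mul_apply (hD _ hk1) hS hS0 (hα.trans (ha _ hk1)) (hb _ hk1) _ k u v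
      _ ≤ ((a (k + 1) • blockM0 m n + b (k + 1) • D (k + 1)) * (α • P k)) u v :=
          mul_apply_le_mul_apply hF (fun u v => by simpa using ih (by omega) u v) u v
      _ = α * P (k + 1) u v := by
          rw [hP k hk, Matrix.mul_smul, Matrix.smul_apply, smul_eq_mul]

theorem pow_add_sum_le_product {D P : ℕ → Matrix (Fin m × Fin n) (Fin m × Fin n) ℝ}
    {a b : ℕ → ℝ} {ℓ : ℕ} (hℓ : 1 ≤ ℓ) {α : ℝ} (hα : 0 < α)
    (ha : ∀ i ∈ Finset.Icc 1 ℓ, α ≤ a i) (hb : ∀ i ∈ Finset.Icc 1 ℓ, 0 ≤ b i)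
    (hD : ∀ i ∈ Finset.Icc 1 ℓ, ∀ u v, 0 ≤ D i u v)
    (hD0 : ∀ i ∈ Finset.Icc 1 ℓ, ∀ u v : Fin m × Fin n, u.1.val ≠ 0 → D i u v = 0)
    (hP0 : P 0 = 1)
    (hP : ∀ i < ℓ, P (i + 1) = (a (i + 1) • blockM0 m n + b (i + 1) • D (i + 1)) * P i)
    (u v : Fin m × Fin n) :
    α ^ ℓ * (blockM0 m n ^ ℓ) u v
      + α ^ (ℓ - 1) * (∑ i ∈ Finset.Icc 1 ℓ, b i • (D i * blockM0 m n ^ (i - 1))) u v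
      ≤ P ℓ u v := by
  obtain ⟨k, rfl⟩ := Nat.exists_eq_add_of_le' hℓ
  have key := smul_pow_add_sum_le_smul_product hα.le ha hb hD hD0 hP0 hP le_rfl u v
  simp only [Matrix.add_apply, Matrix.smul_apply, smul_eq_mul] at key
  refine le_of_mul_le_mul_left (le_of_eq_of_le ?_ key) hα
  rw [Nat.add_sub_cancel]
  ring

end BlockM0

theorem product_entrywise_lower_bound_general
    (m n ℓ : ℕ) (hℓ : 1 ≤ ℓ)
    (τv τhi : ℝ)
    (D : ℕ → Matrix (Fin m × Fin n) (Fin m × Fin n) ℝ)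
    (hDrow : ∀ i ∈ Finset.Icc 1 ℓ, ∀ u v : Fin m × Fin n, u.1.val ≠ 0 → D i u v = 0)
    (hDnonneg : ∀ i ∈ Finset.Icc 1 ℓ, ∀ u v : Fin m × Fin n, 0 ≤ D i u v)
    (h : ℕ → ℝ)
    (hh : ∀ i ∈ Finset.Icc 1 ℓ, 0 < h i ∧ h i ≤ τhi)
    (H : Finset ℕ) (hH : H ⊆ Finset.Icc 1 ℓ)
    (hHτ : ∀ s ∈ H, τv ≤ h s)
    (P : ℕ → Matrix (Fin m × Fin n) (Fin m × Fin n) ℝ)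
    (hP0 : P 0 = 1)
    (hPrec : ∀ i < ℓ, P (i + 1) =
      (Real.exp (-h (i + 1)) • blockM0 m n
        + (1 - Real.exp (-h (i + 1))) • D (i + 1)) * P i) :
    ∀ u v : Fin m × Fin n,
      min (Real.exp (-((ℓ : ℝ) * τhi)))
          (Real.exp (-(((ℓ : ℝ) - 1) * τhi)) * (1 - Real.exp (-τv))) *
        (((blockM0 m n) ^ ℓ + ∑ i ∈ H, D i * (blockM0 m n) ^ (i - 1)) u v)
      ≤ P ℓ u v := by
  intro u v
  have hX : ∀ i ∈ Finset.Icc 1 ℓ, 0 ≤ (D i * blockM0 m n ^ (i - 1)) u v := fun i hi =>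
    mul_apply_nonneg (hDnonneg i hi) (pow_apply_nonneg blockM0_nonneg _) u v
  have hb : ∀ i ∈ Finset.Icc 1 ℓ, 0 ≤ 1 - Real.exp (-h i) := fun i hi =>
    sub_nonneg.mpr (Real.exp_le_one_iff.mpr (neg_nonpos.mpr (hh i hi).1.le))
  have hexp_ℓ : Real.exp (-((ℓ : ℝ) * τhi)) = Real.exp (-τhi) ^ ℓ := by
    rw [← Real.exp_nat_mul]; ring_nf
  have hexp_pred : Real.exp (-(((ℓ : ℝ) - 1) * τhi)) = Real.exp (-τhi) ^ (ℓ - 1) := by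
    rw [← Real.exp_nat_mul, Nat.cast_sub hℓ]; ring_nf
  have hH_sum := Finset.mul_sum_le_sum_mul_of_subset hH
    (fun i hi => sub_le_sub_left (Real.exp_le_exp.mpr (neg_le_neg (hHτ i hi))) 1) hb hX
  have key := pow_add_sum_le_product hℓ (Real.exp_pos (-τhi))
    (fun i hi => Real.exp_le_exp.mpr (neg_le_neg (hh i hi).2)) hb hDnonneg hDrow hP0 hPrec u v
  simp only [Matrix.sum_apply, Matrix.smul_apply, smul_eq_mul] at key
  rw [hexp_ℓ, hexp_pred, Matrix.add_apply, Matrix.sum_apply, mul_add]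
  refine le_trans (add_le_add ?_ ?_) key
  · exact mul_le_mul_of_nonneg_right (min_le_left _ _) (pow_apply_nonneg blockM0_nonneg ℓ u v)
  · calc _ ≤ Real.exp (-τhi) ^ (ℓ - 1) * (1 - Real.exp (-τv))
            * ∑ i ∈ H, (D i * blockM0 m n ^ (i - 1)) u v :=
          mul_le_mul_of_nonneg_right (min_le_right _ _)
            (Finset.sum_nonneg fun i hi => hX i (hH hi))
      _ ≤ _ := by
          rw [mul_assoc]
          exact mul_le_mul_of_nonneg_left hH_sum (pow_nonneg (Real.exp_pos _).le _)

/-- Entrywise lower bound for the product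
`(e^{-h_ℓ} M₀ + (1 - e^{-h_ℓ}) D_ℓ) ⋯ (e^{-h_1} M₀ + (1 - e^{-h_1}) D_1)` (factor `i = 1`
applied first, i.e. rightmost): it dominates
`min {e^{-ℓτ̂}, e^{-(ℓ-1)τ̂} (1 - e^{-τ̂_v})} · (M₀^ℓ + Σ_{i ∈ H} D_i M₀^{i-1})`. -/
theorem product_entrywise_lower_bound
    (m n ℓ : ℕ) (hm : 2 ≤ m) (hn : 1 ≤ n) (hℓ : 1 ≤ ℓ)
    (τv τhi : ℝ) (hτv : 0 < τv) (hττ : τv ≤ τhi)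
    (D : ℕ → Matrix (Fin m × Fin n) (Fin m × Fin n) ℝ)
    (hDrow : ∀ i ∈ Finset.Icc 1 ℓ, ∀ u v : Fin m × Fin n, u.1.val ≠ 0 → D i u v = 0)
    (hDnonneg : ∀ i ∈ Finset.Icc 1 ℓ, ∀ u v : Fin m × Fin n, 0 ≤ D i u v)
    (h : ℕ → ℝ)
    (hh : ∀ i ∈ Finset.Icc 1 ℓ, 0 < h i ∧ h i ≤ τhi)
    (H : Finset ℕ) (hH : H ⊆ Finset.Icc 1 ℓ)
    (hHτ : ∀ s ∈ H, τv ≤ h s)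
    (P : ℕ → Matrix (Fin m × Fin n) (Fin m × Fin n) ℝ)
    (hP0 : P 0 = 1)
    (hPrec : ∀ i < ℓ, P (i + 1) =
      (Real.exp (-h (i + 1)) • blockM0 m n
        + (1 - Real.exp (-h (i + 1))) • D (i + 1)) * P i) :
    ∀ u v : Fin m × Fin n,
      min (Real.exp (-((ℓ : ℝ) * τhi)))
          (Real.exp (-(((ℓ : ℝ) - 1) * τhi)) * (1 - Real.exp (-τv))) *
        (((blockM0 m n) ^ ℓ + ∑ i ∈ H, D i * (blockM0 m n) ^ (i - 1)) u v)
      ≤ P ℓ u v :=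
  product_entrywise_lower_bound_general m n ℓ hℓ τv τhi D hDrow hDnonneg h hh H hH hHτ P hP0 hPrec
end
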